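/- For any D-formula F, the QFLIA formula ⟦F⟧ produced by the recursive reduction is equivalent to F: an integer assignment satisfies F (under the intended table semantics) if and only if it satisfies ⟦F⟧. -/

import Mathlib

namespace DLogic

/-- Integer terms of the logic D (rows are flattened into tuples of integers;
`col d i` is de Bruijn-style access to column `i` of the row bound by the
`d`-th enclosing selection). -/
inductive Term : Type
  | var : ℕ → Term
  | col : ℕ → ℕ → Term
  | const : ℤ → Term
  | add : Term → Term → Term
  | mul : ℤ → Term → Term

mutual
  /-- Table expressions of D. -/
  inductive Table : Type
    | input : List (List Term) → Table
    | sel : Formula → Table → Table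
    | prod : Table → Table → Table
    | union : Table → Table → Table
  /-- Formulas of D. -/
  inductive Formula : Type
    | le : Term → Term → Formula
    | nonempty : Table → Formula
    | not : Formula → Formula
    | or : Formula → Formula → Formula
end

def Term.eval (env : ℕ → ℤ) (stk : List (List ℤ)) : Term → ℤ
  | .var n => env n
  | .col d i => (stk.getD d []).getD i 0
  | .const k => k
  | .add a b => a.eval env stk + b.eval env stk
  | .mul k t => k * t.eval env stk

mutual
  /-- The finite set (list) of rows denoted by a table expression. -/
  def Table.eval (env : ℕ → ℤ) (stk : List (List ℤ)) : Table → List (List ℤ)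
    | .input rows => rows.map (fun r => r.map (fun t => t.eval env stk))
    | .sel F D => (D.eval env stk).filter (fun r => F.eval env (r :: stk))
    | .prod D₁ D₂ =>
        (D₁.eval env stk).flatMap (fun r₁ => (D₂.eval env stk).map (fun r₂ => r₁ ++ r₂))
    | .union D₁ D₂ => D₁.eval env stk ++ D₂.eval env stk
  /-- Truth value of a D formula. -/
  def Formula.eval (env : ℕ → ℤ) (stk : List (List ℤ)) : Formula → Bool
    | .le t₁ t₂ => decide (t₁.eval env stk ≤ t₂.eval env stk)
    | .nonempty D => !(D.eval env stk).isEmpty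
    | .not F => !(F.eval env stk)
    | .or F₁ F₂ => F₁.eval env stk || F₂.eval env stk
end

/-- Satisfiability of a D formula. -/
def Satisfiable (F : Formula) : Prop := ∃ env : ℕ → ℤ, F.eval env [] = true

end DLogic

namespace DLogic

/- The guarded-row reduction ⟦·⟧: a table expression is represented as a
finite list of guarded rows `(r, b)` (the row `r` is present iff the guard
`b` holds); `⟦σx.F(D)⟧` conjoins `⟦F[x/r]⟧` to each guard, `⟦D₁ × D₂⟧`
takes pairwise products with conjoined guards, `⟦D₁ ∪ D₂⟧` is the union,
and `⟦∃̇D⟧` is the disjunction of the guards. -/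
mutual
  def Table.red (env : ℕ → ℤ) (stk : List (List ℤ)) : Table → List (List ℤ × Bool)
    | .input rows => rows.map (fun r => (r.map (fun t => t.eval env stk), true))
    | .sel F D => (D.red env stk).map (fun rb => (rb.1, rb.2 && F.red env (rb.1 :: stk)))
    | .prod D₁ D₂ =>
        (D₁.red env stk).flatMap (fun rb₁ =>
          (D₂.red env stk).map (fun rb₂ => (rb₁.1 ++ rb₂.1, rb₁.2 && rb₂.2)))
    | .union D₁ D₂ => D₁.red env stk ++ D₂.red env stk
  def Formula.red (env : ℕ → ℤ) (stk : List (List ℤ)) : Formula → Bool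
    | .le t₁ t₂ => decide (t₁.eval env stk ≤ t₂.eval env stk)
    | .nonempty D => (D.red env stk).any (fun rb => rb.2)
    | .not F => !(F.red env stk)
    | .or F₁ F₂ => F₁.red env stk || F₂.red env stk
end

end DLogic

/-! Deleting the rows of `⟦D⟧` whose guard is false and forgetting the guards yields exactly
the rows of `D`: each constructor of the reduction commutes with this deletion. This invariant
and `⟦F⟧ = F` are proved together by mutual induction, since the guards of `⟦σx.F(D)⟧` are
built from `⟦F⟧` and `⟦∃̇D⟧` is the disjunction of the guards. -/

namespace DLogic

def presentRows {α : Type*} (l : List (α × Bool)) : List α :=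
  (l.filter Prod.snd).map Prod.fst

section presentRows

variable {α β γ : Type*}

@[simp]
theorem presentRows_nil : presentRows ([] : List (α × Bool)) = [] := rfl

@[simp]
theorem presentRows_cons (a : α) (b : Bool) (l : List (α × Bool)) :
    presentRows ((a, b) :: l) = if b then a :: presentRows l else presentRows l := by
  cases b <;> simp [presentRows]

theorem presentRows_append (l₁ l₂ : List (α × Bool)) :
    presentRows (l₁ ++ l₂) = presentRows l₁ ++ presentRows l₂ := by
  simp [presentRows]

theorem presentRows_map_const (f : β → α) (b : Bool) (l : List β) :
    presentRows (l.map fun x => (f x, b)) = if b then l.map f else [] := by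
  induction l <;> cases b <;> simp_all

theorem presentRows_map_fst (g : α → β) (l : List (α × Bool)) :
    presentRows (l.map fun rb => (g rb.1, rb.2)) = (presentRows l).map g := by
  simp [presentRows, List.filter_map, Function.comp_def]

theorem presentRows_map_and (p : α → Bool) (l : List (α × Bool)) :
    presentRows (l.map fun rb => (rb.1, rb.2 && p rb.1)) = (presentRows l).filter p := by
  induction l with
  | nil => rfl
  | cons rb l ih =>
    obtain ⟨a, b⟩ := rb
    cases b <;> cases h : p a <;> simp_all

theorem presentRows_flatMap_map (f : α → β → γ) (l₁ : List (α × Bool)) (l₂ : List (β × Bool)) :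
    presentRows (l₁.flatMap fun rb₁ => l₂.map fun rb₂ => (f rb₁.1 rb₂.1, rb₁.2 && rb₂.2)) =
      (presentRows l₁).flatMap fun a => (presentRows l₂).map (f a) := by
  induction l₁ with
  | nil => rfl
  | cons rb l₁ ih =>
    obtain ⟨a, b⟩ := rb
    cases b <;> simp [ih, presentRows_append, presentRows_map_const, presentRows_map_fst]

theorem any_snd_eq_not_isEmpty_presentRows (l : List (α × Bool)) :
    l.any Prod.snd = !(presentRows l).isEmpty := by
  induction l with
  | nil => rfl
  | cons rb l ih =>
    obtain ⟨a, b⟩ := rb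
    cases b <;> simp_all

end presentRows

mutual

theorem Table.presentRows_red (D : Table) (env : ℕ → ℤ) (stk : List (List ℤ)) :
    presentRows (D.red env stk) = D.eval env stk := by
  cases D with
  | input rows => rw [Table.red, Table.eval, presentRows_map_const, if_pos rfl]
  | sel F D =>
    rw [Table.red, Table.eval, presentRows_map_and (fun r => F.red env (r :: stk)),
      Table.presentRows_red D]
    exact List.filter_congr fun r _ => Formula.red_eq_eval F env (r :: stk)
  | prod D₁ D₂ =>
    rw [Table.red, Table.eval, presentRows_flatMap_map (· ++ ·), Table.presentRows_red D₁,
      Table.presentRows_red D₂]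
  | union D₁ D₂ =>
    rw [Table.red, Table.eval, presentRows_append, Table.presentRows_red D₁,
      Table.presentRows_red D₂]

theorem Formula.red_eq_eval (F : Formula) (env : ℕ → ℤ) (stk : List (List ℤ)) :
    F.red env stk = F.eval env stk := by
  cases F with
  | le t₁ t₂ => rw [Formula.red, Formula.eval]
  | nonempty D =>
    rw [Formula.red, Formula.eval, any_snd_eq_not_isEmpty_presentRows, Table.presentRows_red D]
  | not F => rw [Formula.red, Formula.eval, Formula.red_eq_eval F]
  | or F₁ F₂ => rw [Formula.red, Formula.eval, Formula.red_eq_eval F₁, Formula.red_eq_eval F₂]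

end

end DLogic

/-- For any D-formula `F`, the QFLIA formula `⟦F⟧` produced
by the recursive guarded-row reduction is equivalent to `F`: an integer
assignment satisfies `F` under the intended table semantics iff it satisfies
`⟦F⟧`. -/
theorem DLogic.reduction_equivalent (F : DLogic.Formula) (env : ℕ → ℤ) :
    F.red env [] = true ↔ F.eval env [] = true := by
  rw [DLogic.Formula.red_eq_eval]
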